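/- Let H1, H2 be Hilbert spaces and U ⊆ B(H1), V ⊆ B(H2) be subspaces. Then Ref_e(U ⊗ V) = (B(H1) ⊗ Ref V) ∩ (Ref U ⊗ B(H2)). -/

import Mathlib

/-!
The `Ref_e` condition at `(ξ ⊗ x, η ⊗ y)` only sees the numbers `⟪A ξ, η⟫ * ⟪B x, y⟫` with
`A ∈ U`, `B ∈ V`, and these all vanish iff `(ξ, η)` annihilates `U` or `(x, y)` annihilates `V`.
So `Ref_e (U ⊗ V)` is the intersection of two one-sided conditions, and by symmetry it remains to
see that `B(H₁) ⊗ Ref V` consists of the `T` with `⟪T (ξ ⊗ x), η ⊗ y⟫ = 0` whenever `(x, y)`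
annihilates `V`. The slices `⟨η| T |ξ⟩` of such a `T` lie in `Ref V`, and expanding along a
Hilbert basis `(e k)` of `H₁` writes `T` as the weak sum of the operators
`P_l T P_k = |e l⟩⟨e k| ⊗ ⟨e l| T |e k⟩`, where `P_k` is the projection onto `e k ⊗ H₂`.
-/

noncomputable section

/-- The weak-* closed linear span of a set of operators on a Hilbert space,
described via annihilating (finite sums of) vector functionals; for linear
subspaces this coincides with the weak-* (= weak operator topology) closure. -/
def wspan {E : Type*} [NormedAddCommGroup E] [InnerProductSpace ℂ E]
    (S : Set (E →L[ℂ] E)) : Set (E →L[ℂ] E) :=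
  {T | ∀ (n : ℕ) (x y : Fin n → E),
    (∀ A ∈ S, (∑ i, (inner ℂ (A (x i)) (y i) : ℂ)) = 0) →
      (∑ i, (inner ℂ (T (x i)) (y i) : ℂ)) = 0}

/-- The reflexive hull of a set of operators. -/
def RefHull {E : Type*} [NormedAddCommGroup E] [InnerProductSpace ℂ E]
    (S : Set (E →L[ℂ] E)) : Set (E →L[ℂ] E) :=
  {T | ∀ x y : E, (∀ A ∈ S, (inner ℂ (A x) y : ℂ) = 0) → (inner ℂ (T x) y : ℂ) = 0}

/-- An identification of the Hilbert space `H` with the Hilbert-space tensor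
product `H1 ⊗ H2`: a bilinear map on vectors whose range spans a dense subspace,
multiplicative on inner products, together with the induced tensor product of
operators. -/
structure TensorSetup (H1 H2 H : Type*)
    [NormedAddCommGroup H1] [InnerProductSpace ℂ H1]
    [NormedAddCommGroup H2] [InnerProductSpace ℂ H2]
    [NormedAddCommGroup H] [InnerProductSpace ℂ H] where
  t : H1 →ₗ[ℂ] H2 →ₗ[ℂ] H
  inner_t : ∀ ξ η x y, (inner ℂ (t ξ x) (t η y) : ℂ) = (inner ℂ ξ η : ℂ) * (inner ℂ x y : ℂ)
  dense_t : (Submodule.span ℂ {z | ∃ ξ x, z = t ξ x}).topologicalClosure = ⊤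
  top : (H1 →L[ℂ] H1) → (H2 →L[ℂ] H2) → (H →L[ℂ] H)
  top_apply : ∀ A B ξ x, top A B (t ξ x) = t (A ξ) (B x)

/-- The reflexive hull relative to elementary tensors, `Ref_e`. -/
def RefE {H1 H2 H : Type*} [NormedAddCommGroup H1] [InnerProductSpace ℂ H1]
    [NormedAddCommGroup H2] [InnerProductSpace ℂ H2]
    [NormedAddCommGroup H] [InnerProductSpace ℂ H]
    (ts : TensorSetup H1 H2 H) (S : Set (H →L[ℂ] H)) : Set (H →L[ℂ] H) :=
  {T | ∀ (ξ η : H1) (x y : H2),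
    (∀ A ∈ S, (inner ℂ (A (ts.t ξ x)) (ts.t η y) : ℂ) = 0) →
      (inner ℂ (T (ts.t ξ x)) (ts.t η y) : ℂ) = 0}

variable {H1 H2 H : Type*}
  [NormedAddCommGroup H1] [InnerProductSpace ℂ H1] [CompleteSpace H1]
  [NormedAddCommGroup H2] [InnerProductSpace ℂ H2] [CompleteSpace H2]
  [NormedAddCommGroup H] [InnerProductSpace ℂ H] [CompleteSpace H]

open scoped InnerProductSpace
open InnerProductSpace (rankOne)

lemma forall_mul_eq_zero_iff {α β M₀ : Type*} [MulZeroClass M₀] [NoZeroDivisors M₀]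
    {s : Set α} {t : Set β} {f : α → M₀} {g : β → M₀} :
    (∀ a ∈ s, ∀ b ∈ t, f a * g b = 0) ↔ (∀ a ∈ s, f a = 0) ∨ ∀ b ∈ t, g b = 0 := by
  refine ⟨fun h => ?_, ?_⟩
  · by_contra! hne
    obtain ⟨⟨a, ha, hfa⟩, b, hb, hgb⟩ := hne
    exact mul_ne_zero hfa hgb (h a ha b hb)
  · rintro (h | h) a ha b hb
    · rw [h a ha, zero_mul]
    · rw [h b hb, mul_zero]

section wspan

variable {E : Type*} [NormedAddCommGroup E] [InnerProductSpace ℂ E]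

lemma subset_wspan (S : Set (E →L[ℂ] E)) : S ⊆ wspan S :=
  fun A hA _ _ _ h => h A hA

lemma inner_eq_zero_of_mem_wspan {S : Set (E →L[ℂ] E)} {T : E →L[ℂ] E} (hT : T ∈ wspan S)
    {x y : E} (h : ∀ A ∈ S, ⟪A x, y⟫_ℂ = 0) : ⟪T x, y⟫_ℂ = 0 := by
  simpa using hT 1 (fun _ => x) (fun _ => y) (by simpa using h)

lemma forall_mem_wspan_inner_eq_zero_iff {S : Set (E →L[ℂ] E)} {x y : E} :
    (∀ A ∈ wspan S, ⟪A x, y⟫_ℂ = 0) ↔ ∀ A ∈ S, ⟪A x, y⟫_ℂ = 0 :=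
  ⟨fun h A hA => h A (subset_wspan S hA), fun h _ hT => inner_eq_zero_of_mem_wspan hT h⟩

end wspan

namespace TensorSetup

variable {E₁ E₂ E : Type*} [NormedAddCommGroup E₁] [InnerProductSpace ℂ E₁]
  [NormedAddCommGroup E₂] [InnerProductSpace ℂ E₂] [NormedAddCommGroup E] [InnerProductSpace ℂ E]
  (ts : TensorSetup E₁ E₂ E)

lemma refE_wspan (S : Set (E →L[ℂ] E)) : RefE ts (wspan S) = RefE ts S := by
  ext T
  simp only [RefE, Set.mem_ofPred_eq, forall_mem_wspan_inner_eq_zero_iff]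

lemma inner_top_t (A : E₁ →L[ℂ] E₁) (B : E₂ →L[ℂ] E₂) (ξ η : E₁) (x y : E₂) :
    ⟪ts.top A B (ts.t ξ x), ts.t η y⟫_ℂ = ⟪A ξ, η⟫_ℂ * ⟪B x, y⟫_ℂ := by
  rw [ts.top_apply, ts.inner_t]

lemma mem_refE_top_iff (U : Set (E₁ →L[ℂ] E₁)) (V : Set (E₂ →L[ℂ] E₂)) (T : E →L[ℂ] E) :
    T ∈ RefE ts {X | ∃ A ∈ U, ∃ B ∈ V, X = ts.top A B} ↔
      ∀ ξ η x y, ((∀ A ∈ U, ⟪A ξ, η⟫_ℂ = 0) ∨ ∀ B ∈ V, ⟪B x, y⟫_ℂ = 0) →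
        ⟪T (ts.t ξ x), ts.t η y⟫_ℂ = 0 := by
  refine forall₄_congr fun ξ η x y => imp_congr_left ?_
  simp only [← forall_mul_eq_zero_iff, Set.mem_ofPred_eq, forall_exists_index, and_imp]
  exact ⟨fun h A hA B hB => ts.inner_top_t A B ξ η x y ▸ h _ A hA B hB rfl,
    fun h _ A hA B hB hX => hX ▸ (ts.inner_top_t A B ξ η x y).trans (h A hA B hB)⟩

lemma norm_t (ξ : E₁) (x : E₂) : ‖ts.t ξ x‖ = ‖ξ‖ * ‖x‖ := by
  have h := congrArg RCLike.re (ts.inner_t ξ ξ x x)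
  simp only [inner_self_eq_norm_sq_to_K] at h
  norm_cast at h
  rwa [← mul_pow, sq_eq_sq₀ (norm_nonneg _) (by positivity)] at h

def leftCLM (ξ : E₁) : E₂ →L[ℂ] E :=
  (ts.t ξ).mkContinuous ‖ξ‖ fun x => (ts.norm_t ξ x).le

def rightCLM (x : E₂) : E₁ →L[ℂ] E :=
  (ts.t.flip x).mkContinuous ‖x‖ fun ξ => by rw [LinearMap.flip_apply, ts.norm_t, mul_comm]

@[simp] lemma leftCLM_apply (ξ : E₁) (x : E₂) : ts.leftCLM ξ x = ts.t ξ x := rfl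

@[simp] lemma rightCLM_apply (x : E₂) (ξ : E₁) : ts.rightCLM x ξ = ts.t ξ x := rfl

def leftIsometry {ξ : E₁} (hξ : ‖ξ‖ = 1) : E₂ →ₗᵢ[ℂ] E :=
  ⟨ts.t ξ, fun x => by rw [ts.norm_t, hξ, one_mul]⟩

@[simp] lemma leftIsometry_apply {ξ : E₁} (hξ : ‖ξ‖ = 1) (x : E₂) :
    ts.leftIsometry hξ x = ts.t ξ x := rfl

lemma ext_t {F : Type*} [NormedAddCommGroup F] [NormedSpace ℂ F] {f g : E →L[ℂ] F}
    (h : ∀ ξ x, f (ts.t ξ x) = g (ts.t ξ x)) : f = g :=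
  ContinuousLinearMap.ext_on (Submodule.dense_iff_topologicalClosure_eq_top.2 ts.dense_t)
    (by rintro _ ⟨ξ, x, rfl⟩; exact h ξ x)

section Complete

variable [CompleteSpace E₂] [CompleteSpace E]

def contract (ξ : E₁) : E →L[ℂ] E₂ := ContinuousLinearMap.adjoint (ts.leftCLM ξ)

lemma inner_contract_left (ξ : E₁) (z : E) (y : E₂) :
    ⟪ts.contract ξ z, y⟫_ℂ = ⟪z, ts.t ξ y⟫_ℂ :=
  ContinuousLinearMap.adjoint_inner_left (ts.leftCLM ξ) y z

lemma contract_t (ξ ζ : E₁) (x : E₂) : ts.contract ξ (ts.t ζ x) = ⟪ξ, ζ⟫_ℂ • x :=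
  ext_inner_right ℂ fun y => by
    rw [inner_contract_left, ts.inner_t, inner_smul_left, inner_conj_symm]

def proj (ξ : E₁) : E →L[ℂ] E := ts.leftCLM ξ ∘L ts.contract ξ

lemma proj_apply (ξ : E₁) (z : E) : ts.proj ξ z = ts.t ξ (ts.contract ξ z) := rfl

lemma isHilbertSum_leftIsometry {κ : Type*} (e : HilbertBasis κ ℂ E₁) :
    IsHilbertSum ℂ (fun _ : κ => E₂) fun k => ts.leftIsometry (e.orthonormal.1 k) := by
  refine IsHilbertSum.mk (fun k l hkl x y => ?_) ?_
  · simp only [leftIsometry_apply, ts.inner_t, e.orthonormal.2 hkl, zero_mul]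
  · rw [← ts.dense_t]
    refine Submodule.topologicalClosure_minimal _ (Submodule.span_le.2 ?_)
      (Submodule.isClosed_topologicalClosure _)
    rintro _ ⟨ξ, x, rfl⟩
    refine (Submodule.isClosed_topologicalClosure _).mem_of_tendsto
      ((e.hasSum_repr ξ).mapL (ts.rightCLM x)) (Filter.Eventually.of_forall fun F => ?_)
    refine Submodule.sum_mem _ fun k _ => Submodule.le_topologicalClosure _ ?_
    exact Submodule.mem_iSup_of_mem k ⟨e.repr ξ k • x, by simp⟩

lemma hasSum_proj {κ : Type*} (e : HilbertBasis κ ℂ E₁) (z : E) :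
    HasSum (fun k => ts.proj (e k) z) z := by
  classical
  have hV := ts.isHilbertSum_leftIsometry e
  set w := hV.linearIsometryEquiv z
  have hsum : HasSum (fun k => ts.t (e k) (w k)) z := by
    simpa [w] using hV.hasSum_linearIsometryEquiv_symm w
  suffices hw : ∀ k, ts.contract (e k) z = w k by simpa only [proj_apply, hw] using hsum
  intro k
  refine (hsum.mapL (ts.contract (e k))).unique ?_
  convert hasSum_ite_eq k (w k) using 2 with l
  rw [contract_t, orthonormal_iff_ite.1 e.orthonormal]
  split_ifs <;> simp_all [eq_comm]

def slice (ξ η : E₁) (T : E →L[ℂ] E) : E₂ →L[ℂ] E₂ := ts.contract η ∘L T ∘L ts.leftCLM ξ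

lemma inner_slice (ξ η : E₁) (T : E →L[ℂ] E) (x y : E₂) :
    ⟪ts.slice ξ η T x, y⟫_ℂ = ⟪T (ts.t ξ x), ts.t η y⟫_ℂ :=
  ts.inner_contract_left η _ y

lemma top_rankOne_slice (ξ η : E₁) (T : E →L[ℂ] E) :
    ts.top (rankOne ℂ η ξ) (ts.slice ξ η T) =
      ts.proj η ∘L T ∘L ts.proj ξ :=
  ts.ext_t fun ζ x => by simp [ts.top_apply, slice, proj_apply, contract_t]

lemma hasSum_sum_inner_proj {κ : Type*} (e : HilbertBasis κ ℂ E₁) (f : E →L[ℂ] E) {n : ℕ}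
    (z w : Fin n → E) :
    HasSum (fun k => ∑ i, ⟪f (ts.proj (e k) (z i)), w i⟫_ℂ) (∑ i, ⟪f (z i), w i⟫_ℂ) :=
  hasSum_sum fun i _ => ((ts.hasSum_proj e (z i)).mapL f).mapL (innerSLFlip ℂ (w i))

lemma mem_wspan_of_slice_mem [CompleteSpace E₁] (W : Set (E₂ →L[ℂ] E₂)) {T : E →L[ℂ] E}
    (hT : ∀ ξ η, ts.slice ξ η T ∈ W) : T ∈ wspan {X | ∃ A, ∃ B ∈ W, X = ts.top A B} := by
  intro n z w hann
  obtain ⟨κ, e, -⟩ := exists_hilbertBasis ℂ E₁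
  have hkl : ∀ k l, ∑ i, ⟪ts.proj (e l) (T (ts.proj (e k) (z i))), w i⟫_ℂ = 0 := fun k l => by
    simpa only [ts.top_rankOne_slice, ContinuousLinearMap.comp_apply] using
      hann _ ⟨rankOne ℂ (e l) (e k), _, hT (e k) (e l), rfl⟩
  have hk : ∀ k, ∑ i, ⟪T (ts.proj (e k) (z i)), w i⟫_ℂ = 0 := fun k =>
    (ts.hasSum_sum_inner_proj e (.id ℂ E) _ w).unique (by
      convert hasSum_zero with l
      exact hkl k l)
  exact (ts.hasSum_sum_inner_proj e T z w).unique (by simpa only [hk] using hasSum_zero)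

lemma mem_wspan_top_refHull_iff [CompleteSpace E₁] (V : Set (E₂ →L[ℂ] E₂)) (T : E →L[ℂ] E) :
    T ∈ wspan {X | ∃ A, ∃ B ∈ RefHull V, X = ts.top A B} ↔
      ∀ ξ η x y, (∀ B ∈ V, ⟪B x, y⟫_ℂ = 0) → ⟪T (ts.t ξ x), ts.t η y⟫_ℂ = 0 := by
  refine ⟨fun hT ξ η x y hxy => inner_eq_zero_of_mem_wspan hT ?_, fun h => ?_⟩
  · rintro _ ⟨A, B, hB, rfl⟩
    rw [inner_top_t, hB x y hxy, mul_zero]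
  · exact ts.mem_wspan_of_slice_mem _ fun ξ η x y hxy =>
      (ts.inner_slice ξ η T x y).trans (h ξ η x y hxy)

end Complete

def swap : TensorSetup E₂ E₁ E where
  t := ts.t.flip
  inner_t x y ξ η := by rw [LinearMap.flip_apply, LinearMap.flip_apply, ts.inner_t, mul_comm]
  dense_t := by
    rw [← ts.dense_t]
    congr 3
    ext z
    exact exists_comm
  top B A := ts.top A B
  top_apply B A x ξ := ts.top_apply A B ξ x

lemma mem_wspan_refHull_top_iff [CompleteSpace E₁] [CompleteSpace E₂] [CompleteSpace E]
    (U : Set (E₁ →L[ℂ] E₁)) (T : E →L[ℂ] E) :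
    T ∈ wspan {X | ∃ A ∈ RefHull U, ∃ B, X = ts.top A B} ↔
      ∀ ξ η x y, (∀ A ∈ U, ⟪A ξ, η⟫_ℂ = 0) → ⟪T (ts.t ξ x), ts.t η y⟫_ℂ = 0 := by
  have hgen : {X | ∃ A ∈ RefHull U, ∃ B, X = ts.top A B} =
      {X | ∃ B, ∃ A ∈ RefHull U, X = ts.swap.top B A} := by
    ext X
    exact ⟨fun ⟨A, hA, B, hX⟩ => ⟨B, A, hA, hX⟩, fun ⟨B, A, hA, hX⟩ => ⟨A, hA, B, hX⟩⟩
  rw [hgen, ts.swap.mem_wspan_top_refHull_iff]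
  exact ⟨fun h ξ η x y => h x y ξ η, fun h x y ξ η => h ξ η x y⟩

end TensorSetup

/-- Lemma on the elementary reflexive hull of a tensor product of subspaces:
`Ref_e (U ⊗ V) = (B(H1) ⊗ Ref V) ∩ (Ref U ⊗ B(H2))`. -/
theorem stmt2_refE_fubini
    (ts : TensorSetup H1 H2 H)
    (U : Submodule ℂ (H1 →L[ℂ] H1)) (V : Submodule ℂ (H2 →L[ℂ] H2)) :
    RefE ts (wspan {X | ∃ A ∈ U, ∃ B ∈ V, X = ts.top A B}) =
      wspan {X | ∃ A : H1 →L[ℂ] H1, ∃ B ∈ RefHull (V : Set (H2 →L[ℂ] H2)), X = ts.top A B} ∩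
      wspan {X | ∃ A ∈ RefHull (U : Set (H1 →L[ℂ] H1)), ∃ B : H2 →L[ℂ] H2, X = ts.top A B} := by
  ext T
  rw [ts.refE_wspan, Set.mem_inter_iff, ts.mem_wspan_top_refHull_iff,
    ts.mem_wspan_refHull_top_iff]
  refine (ts.mem_refE_top_iff U V T).trans ?_
  simp only [or_imp, forall_and]
  exact and_comm
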